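/- arXiv:1203.2658 — 11 statements merged into one kernel-verified Lean document; each statement's English description precedes it below -/
import Mathlib

section
/- Let V be a finite-dimensional vector space with a nondegenerate reflexive bilinear form, H a hyperplane of V, and U a subspace not contained in H with U∞ := U ∩ H. If U ∩ U∞^⊥ is 1-dimensional, then U is regular (U ∩ U^⊥ = 0). -/
open LinearMap.BilinForm in
/-- If U ∩ (U∩H)^⊥ is 1-dimensional then U is regular. -/
theorem stmt2 {F V : Type*} [Field F] [AddCommGroup V] [Module F V]
    [FiniteDimensional F V] [CharP F 2] [PerfectField F]
    (ξ : LinearMap.BilinForm F V) (hnd : ξ.Nondegenerate) (hrefl : ξ.IsRefl)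
    (H : Submodule F V) (hH : ∀ v : V, ξ v v = 0 ↔ v ∈ H)
    (hHhyp : Module.finrank F H + 1 = Module.finrank F V)
    (U : Submodule F V) (hU : ¬ U ≤ H)
    (h1 : Module.finrank F ↥(U ⊓ ξ.orthogonal (U ⊓ H)) = 1) :
    U ⊓ ξ.orthogonal U = ⊥ := by
  by_contra hne
  obtain ⟨v, hv, hv0⟩ := (Submodule.ne_bot_iff _).mp hne
  have hvU : v ∈ U := hv.1
  have hvorth : ∀ n ∈ U, ξ n v = 0 := fun n hn => hv.2 n hn
  have hvH : v ∈ H := (hH v).mp (hvorth v hvU)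
  set W := U ⊓ H with hW
  have hvW : v ∈ W := ⟨hvU, hvH⟩
  -- dim W = dim U - 1
  have hsup : U ⊔ H = ⊤ := by
    rcases lt_or_eq_of_le (le_sup_right : H ≤ U ⊔ H) with hlt | heq
    · apply Submodule.eq_top_of_finrank_eq
      have h2 := Submodule.finrank_lt_finrank_of_lt hlt
      have h3 : Module.finrank F ↥(U ⊔ H) ≤ Module.finrank F V :=
        Submodule.finrank_le _
      omega
    · exact absurd (le_sup_left.trans heq.ge) hU
  have hdimW : Module.finrank F ↥W + 1 = Module.finrank F ↥U := by
    have := Submodule.finrank_sup_add_finrank_inf_eq U H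
    rw [hsup] at this
    rw [finrank_top, ← hW] at this
    omega
  -- the restriction map φ : U → W*
  set φ : ↥U →ₗ[F] (↥W →ₗ[F] F) := ξ.compl₁₂ U.subtype W.subtype with hφ
  -- ker φ ≃ U ⊓ W^⊥
  have hker : LinearMap.ker φ = Submodule.comap U.subtype (U ⊓ ξ.orthogonal W) := by
    ext ⟨u, hu⟩
    simp only [LinearMap.mem_ker, Submodule.mem_comap, Submodule.subtype_apply,
      Submodule.mem_inf, LinearMap.BilinForm.mem_orthogonal_iff]
    constructor
    · intro h
      refine ⟨hu, fun n hn => hrefl _ _ ?_⟩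
      have := congrFun (congrArg (fun f => f.toFun) h) ⟨n, hn⟩
      simpa [φ] using this
    · intro ⟨_, h⟩
      ext ⟨n, hn⟩
      simpa [φ] using hrefl _ _ (h n hn)
  have hkerdim : Module.finrank F ↥(LinearMap.ker φ) = 1 := by
    rw [hker]
    rw [LinearEquiv.finrank_eq (Submodule.comapSubtypeEquivOfLe inf_le_left)]
    exact h1
  -- range φ ≤ ker (evaluation at v)
  set ev : (↥W →ₗ[F] F) →ₗ[F] F := LinearMap.applyₗ (⟨v, hvW⟩ : ↥W) with hev
  have hrange : LinearMap.range φ ≤ LinearMap.ker ev := by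
    rintro f ⟨⟨u, hu⟩, rfl⟩
    rw [LinearMap.mem_ker]
    show (φ ⟨u, hu⟩) ⟨v, hvW⟩ = 0
    simpa [φ] using hvorth u hu
  have hevne : LinearMap.ker ev ≠ ⊤ := by
    intro h
    have hvz : (⟨v, hvW⟩ : ↥W) = 0 := by
      rw [← Module.forall_dual_apply_eq_zero_iff F (⟨v, hvW⟩ : ↥W)]
      intro f
      have hf : f ∈ LinearMap.ker ev := h ▸ Submodule.mem_top
      rw [LinearMap.mem_ker] at hf
      exact hf
    exact hv0 (by simpa using congrArg Subtype.val hvz)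
  have hkerlt : Module.finrank F ↥(LinearMap.ker ev) < Module.finrank F (↥W →ₗ[F] F) := by
    have := Submodule.finrank_lt_finrank_of_lt (lt_top_iff_ne_top.mpr hevne)
    simpa using this
  have hdual : Module.finrank F (↥W →ₗ[F] F) = Module.finrank F ↥W :=
    Subspace.dual_finrank_eq
  have hrn := LinearMap.finrank_range_add_finrank_ker φ
  have hle : Module.finrank F ↥(LinearMap.range φ) ≤ Module.finrank F ↥(LinearMap.ker ev) :=
    Submodule.finrank_mono hrange
  omega
end

section
/- Let V be a finite-dimensional vector space with a nondegenerate reflexive bilinear form, H the hyperplane of isotropic vectors, and U a regular subspace not contained in H with U∞ := U ∩ H. Then dim(Rad(U∞)) ≤ 1, and either U∞ is regular, or Rad(U∞) is 1-dimensional spanned by some p with U ⊄ p^⊥. -/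
open LinearMap.BilinForm in
/-- For regular U ⊄ H, rdim(U∞) ≤ 1 and either U∞ is regular or Rad(U∞) is a
point p with U ⊄ p^⊥. -/
theorem stmt3 {F V : Type*} [Field F] [AddCommGroup V] [Module F V]
    [FiniteDimensional F V] [CharP F 2] [PerfectField F]
    (ξ : LinearMap.BilinForm F V) (hnd : ξ.Nondegenerate) (hrefl : ξ.IsRefl)
    (H : Submodule F V) (hH : ∀ v : V, ξ v v = 0 ↔ v ∈ H)
    (hHhyp : Module.finrank F H + 1 = Module.finrank F V)
    (U : Submodule F V) (hU : ¬ U ≤ H) (hUreg : U ⊓ ξ.orthogonal U = ⊥) :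
    Module.finrank F ↥((U ⊓ H) ⊓ ξ.orthogonal (U ⊓ H)) ≤ 1 ∧
      ((U ⊓ H) ⊓ ξ.orthogonal (U ⊓ H) = ⊥ ∨
        ∃ p : V, p ≠ 0 ∧ (U ⊓ H) ⊓ ξ.orthogonal (U ⊓ H) = Submodule.span F {p} ∧
          ¬ U ≤ ξ.orthogonal (Submodule.span F {p})) := by
  classical
  set R : Submodule F V := (U ⊓ H) ⊓ ξ.orthogonal (U ⊓ H) with hR
  -- pick u₀ ∈ U, u₀ ∉ H
  obtain ⟨u₀, hu₀U, hu₀H⟩ : ∃ u₀, u₀ ∈ U ∧ u₀ ∉ H := by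
    by_contra h
    push_neg at h
    exact hU fun x hx => h x hx
  -- H ⊔ span u₀ = ⊤
  have htop : H ⊔ Submodule.span F {u₀} = ⊤ := by
    have hlt : H < H ⊔ Submodule.span F {u₀} := by
      refine lt_of_le_of_ne le_sup_left ?_
      intro heq
      have : u₀ ∈ H ⊔ Submodule.span F {u₀} := Submodule.mem_sup_right (Submodule.mem_span_singleton_self u₀)
      exact hu₀H (heq ▸ this)
    have h1 : Module.finrank F H < Module.finrank F ↥(H ⊔ Submodule.span F {u₀}) :=
      Submodule.finrank_lt_finrank_of_lt hlt
    have h2 : Module.finrank F V ≤ Module.finrank F ↥(H ⊔ Submodule.span F {u₀}) := by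
      omega
    exact Submodule.eq_top_of_finrank_eq
      (le_antisymm (Submodule.finrank_le _) h2)
  -- key: x ∈ R with ξ u₀ x = 0 ⟹ x = 0
  have key : ∀ x, x ∈ R → ξ u₀ x = 0 → x = 0 := by
    intro x hx hx0
    obtain ⟨⟨hxU, hxH⟩, hxo⟩ := hx
    have hxorth : x ∈ ξ.orthogonal U := by
      intro u hu
      have : u ∈ H ⊔ Submodule.span F {u₀} := htop ▸ Submodule.mem_top
      obtain ⟨h, hh, s, hs, rfl⟩ := Submodule.mem_sup.mp this
      obtain ⟨c, rfl⟩ := Submodule.mem_span_singleton.mp hs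
      have hhU : h ∈ U := by
        have : h = (h + c • u₀) - c • u₀ := by abel
        rw [this]
        exact Submodule.sub_mem _ hu (Submodule.smul_mem _ _ hu₀U)
      have hh0 : ξ h x = 0 := hxo h ⟨hhU, hh⟩
      simp [LinearMap.BilinForm.IsOrtho, hh0, hx0]
    have : x ∈ U ⊓ ξ.orthogonal U := ⟨hxU, hxorth⟩
    simpa [hUreg] using this
  -- finrank R ≤ 1 via injective map R →ₗ F
  have hfin : Module.finrank F R ≤ 1 := by
    let f : R →ₗ[F] F :=
      { toFun := fun x => ξ u₀ x.1
        map_add' := fun a b => by simp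
        map_smul' := fun c a => by simp }
    have hinj : Function.Injective f := by
      rw [← LinearMap.ker_eq_bot]
      ext ⟨x, hx⟩
      simp only [LinearMap.mem_ker, Submodule.mem_bot]
      constructor
      · intro h
        exact Subtype.ext (key x hx h)
      · intro h; rw [h]; simp [f]
    simpa using LinearMap.finrank_le_finrank_of_injective hinj
  refine ⟨hfin, ?_⟩
  rcases Nat.le_one_iff_eq_zero_or_eq_one.mp hfin with h0 | h1
  · left
    exact Submodule.finrank_eq_zero.mp h0
  · right
    have : Nontrivial R := Module.nontrivial_of_finrank_pos (R := F) (by omega)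
    obtain ⟨⟨p, hpR⟩, hp0⟩ := exists_ne (0 : R)
    have hpne : p ≠ 0 := fun h => hp0 (Subtype.ext h)
    have hspan : Submodule.span F {p} = R := by
      apply Submodule.eq_of_le_of_finrank_eq
      · rw [Submodule.span_le, Set.singleton_subset_iff]; exact hpR
      · rw [finrank_span_singleton hpne, h1]
    refine ⟨p, hpne, hspan.symm, ?_⟩
    intro hle
    have hporth : p ∈ ξ.orthogonal U := by
      intro u hu
      have := hle hu p (Submodule.mem_span_singleton_self p)
      exact hrefl _ _ this
    have hpU : p ∈ U := hpR.1.1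
    have : p ∈ U ⊓ ξ.orthogonal U := ⟨hpU, hporth⟩
    rw [hUreg] at this
    exact hpne this
end

section
/- Let V be a finite-dimensional vector space with nondegenerate reflexive bilinear form, H the hyperplane of isotropic vectors, and U a subspace not contained in H with U∞ := U ∩ H such that Rad(U∞) is spanned by a single vector p and U ⊄ p^⊥. Then U ∩ (U∞)^⊥ is 1-dimensional. -/
open LinearMap.BilinForm in
/-- If Rad(U∞) is a point p and U ⊄ p^⊥ then Hrd(U) is a point. -/
theorem stmt4 {F V : Type*} [Field F] [AddCommGroup V] [Module F V]
    [FiniteDimensional F V] [CharP F 2] [PerfectField F]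
    (ξ : LinearMap.BilinForm F V) (hnd : ξ.Nondegenerate) (hrefl : ξ.IsRefl)
    (H : Submodule F V) (hH : ∀ v : V, ξ v v = 0 ↔ v ∈ H)
    (hHhyp : Module.finrank F H + 1 = Module.finrank F V)
    (U : Submodule F V) (hU : ¬ U ≤ H) (p : V) (hp : p ≠ 0)
    (hrad : (U ⊓ H) ⊓ ξ.orthogonal (U ⊓ H) = Submodule.span F {p})
    (hUp : ¬ U ≤ ξ.orthogonal (Submodule.span F {p})) :
    Module.finrank F ↥(U ⊓ ξ.orthogonal (U ⊓ H)) = 1 := by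
  set W : Submodule F V := U ⊓ ξ.orthogonal (U ⊓ H) with hW
  have hpmem : p ∈ (U ⊓ H) ⊓ ξ.orthogonal (U ⊓ H) := by
    rw [hrad]; exact Submodule.mem_span_singleton_self p
  have hpUinf : p ∈ U ⊓ H := hpmem.1
  have hporth : p ∈ ξ.orthogonal (U ⊓ H) := hpmem.2
  have hWH : W ⊓ H = Submodule.span F {p} := by
    rw [← hrad, hW]
    ext x
    simp only [Submodule.mem_inf]
    tauto
  have hWleH : W ≤ H := by
    by_contra hc
    obtain ⟨w, hwW, hwH⟩ := SetLike.not_le_iff_exists.mp hc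
    apply hUp
    -- H ⊔ span {w} = ⊤
    have hlt : H < H ⊔ Submodule.span F {w} := by
      refine lt_of_le_of_ne le_sup_left (fun h => hwH ?_)
      rw [h]
      exact (le_sup_right : Submodule.span F {w} ≤ _) (Submodule.mem_span_singleton_self w)
    have hle : Module.finrank F ↥(H ⊔ Submodule.span F {w}) ≤ Module.finrank F V :=
      Submodule.finrank_le _
    have hlt' := Submodule.finrank_lt_finrank_of_lt hlt
    have htop : H ⊔ Submodule.span F {w} = ⊤ :=
      Submodule.eq_top_of_finrank_eq (by omega)
    intro u hu
    -- decompose u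
    have hu' : u ∈ H ⊔ Submodule.span F {w} := htop ▸ Submodule.mem_top
    obtain ⟨h, hh, x, hx, rfl⟩ := Submodule.mem_sup.mp hu'
    obtain ⟨c, rfl⟩ := Submodule.mem_span_singleton.mp hx
    have hhU : h ∈ U := by
      have : (h + c • w) - c • w ∈ U := U.sub_mem hu (U.smul_mem c hwW.1)
      simpa using this
    have hhUinf : h ∈ U ⊓ H := ⟨hhU, hh⟩
    have hph : ξ p h = 0 := hrefl h p (hporth h hhUinf)
    have hpw : ξ p w = 0 := hwW.2 p hpUinf
    intro n hn
    obtain ⟨d, rfl⟩ := Submodule.mem_span_singleton.mp hn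
    show ξ (d • p) (h + c • w) = 0
    simp [hph, hpw]
  have hWeq : W = Submodule.span F {p} := by
    rw [← hWH, inf_eq_left.mpr hWleH]
  rw [hWeq]
  exact finrank_span_singleton hp
end

section
/- Let V be a finite-dimensional vector space with nondegenerate reflexive bilinear form ξ, H the hyperplane of isotropic vectors, and L a 2-dimensional subspace not contained in H. Then L is regular (L ∩ L^⊥ = 0) if and only if L is not contained in (L ∩ H)^⊥. -/
open LinearMap.BilinForm in
/-- A line L ⊄ H is regular iff L is not contained in (L ∩ H)^⊥. -/
theorem stmt5 {F V : Type*} [Field F] [AddCommGroup V] [Module F V]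
    [FiniteDimensional F V] [CharP F 2] [PerfectField F]
    (ξ : LinearMap.BilinForm F V) (hnd : ξ.Nondegenerate) (hrefl : ξ.IsRefl)
    (H : Submodule F V) (hH : ∀ v : V, ξ v v = 0 ↔ v ∈ H)
    (hHhyp : Module.finrank F H + 1 = Module.finrank F V)
    (L : Submodule F V) (hL2 : Module.finrank F L = 2) (hL : ¬ L ≤ H) :
    L ⊓ ξ.orthogonal L = ⊥ ↔ ¬ L ≤ ξ.orthogonal (L ⊓ H) := by
  have hltL : (L ⊓ H : Submodule F V) < L :=
    lt_of_le_of_ne inf_le_left (fun h => hL (le_trans h.ge inf_le_right))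
  have hdimlt : Module.finrank F (L ⊓ H : Submodule F V) < 2 := by
    have := Submodule.finrank_lt_finrank_of_lt hltL
    omega
  constructor
  · intro hreg hle
    -- find nonzero x ∈ L ⊓ H by dimension count
    have hdim : 1 ≤ Module.finrank F (L ⊓ H : Submodule F V) := by
      have h1 := Submodule.finrank_sup_add_finrank_inf_eq L H
      have h2 : Module.finrank F ↥(L ⊔ H) ≤ Module.finrank F V :=
        Submodule.finrank_le _
      omega
    obtain ⟨x, hxLH, hx0⟩ : ∃ x ∈ L ⊓ H, x ≠ 0 := by
      by_contra h
      push_neg at h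
      have hb : (L ⊓ H : Submodule F V) = ⊥ := (Submodule.eq_bot_iff _).2 h
      rw [hb, finrank_bot] at hdim; omega
    have hx_orth : x ∈ ξ.orthogonal L := by
      intro n hn
      exact hrefl _ _ (hle hn x hxLH)
    have : x ∈ L ⊓ ξ.orthogonal L := ⟨hxLH.1, hx_orth⟩
    rw [hreg, Submodule.mem_bot] at this
    exact hx0 this
  · intro h
    obtain ⟨y, hyL, hy⟩ := Set.not_subset.1 h
    have hy' : ¬ ∀ n ∈ L ⊓ H, ξ.IsOrtho n y := hy
    push_neg at hy'
    obtain ⟨x, hxLH, hxy⟩ := hy'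
    have hxy : ξ x y ≠ 0 := hxy
    have hxne : x ≠ 0 := by rintro rfl; simp at hxy
    have hspanle : Submodule.span F {x} ≤ L ⊓ H := by
      simpa [Submodule.span_le] using hxLH
    have hspan : Submodule.span F {x} = L ⊓ H := by
      apply Submodule.eq_of_le_of_finrank_le hspanle
      rw [finrank_span_singleton hxne]
      omega
    rw [Submodule.eq_bot_iff]
    rintro w ⟨hwL, hwO⟩
    have hwH : w ∈ H := (hH w).1 (hwO w hwL)
    have hwLH : w ∈ Submodule.span F {x} := hspan ▸ (⟨hwL, hwH⟩ : w ∈ L ⊓ H)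
    obtain ⟨c, rfl⟩ := Submodule.mem_span_singleton.1 hwLH
    have h0 : ξ (c • x) y = 0 := hrefl _ _ (hwO y hyL)
    simp only [map_smul, LinearMap.smul_apply, smul_eq_mul] at h0
    rcases mul_eq_zero.1 h0 with hc | hc
    · rw [hc, zero_smul]
    · exact absurd hc hxy
end

section
/- Let V be a finite-dimensional vector space with nondegenerate reflexive bilinear form ξ, H the hyperplane of isotropic vectors, p a nonzero non-isotropic vector (p ∉ H), and L a 2-dimensional subspace containing p. Then L is regular if and only if the 1-dimensional subspace L ∩ H is not contained in p^⊥. -/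
open LinearMap.BilinForm in
/-- For a regular point p, a line L through p is regular iff L ∩ H ⊄ p^⊥. -/
theorem stmt6 {F V : Type*} [Field F] [AddCommGroup V] [Module F V]
    [FiniteDimensional F V] [CharP F 2] [PerfectField F]
    (ξ : LinearMap.BilinForm F V) (hnd : ξ.Nondegenerate) (hrefl : ξ.IsRefl)
    (H : Submodule F V) (hH : ∀ v : V, ξ v v = 0 ↔ v ∈ H)
    (hHhyp : Module.finrank F H + 1 = Module.finrank F V)
    (p : V) (hp0 : p ≠ 0) (hpH : p ∉ H)
    (L : Submodule F V) (hL2 : Module.finrank F L = 2) (hpL : p ∈ L) :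
    L ⊓ ξ.orthogonal L = ⊥ ↔ ¬ (L ⊓ H) ≤ ξ.orthogonal (Submodule.span F {p}) := by
  -- Step 1 : L ⊓ H has dimension 1.
  have hsum := Submodule.finrank_sup_add_finrank_inf_eq L H
  have hsup : Module.finrank F ↥(L ⊔ H) ≤ Module.finrank F V :=
    Submodule.finrank_le _
  have hlt : L ⊓ H < L := by
    refine lt_of_le_of_ne inf_le_left (fun h => ?_)
    have : p ∈ L ⊓ H := by rw [h]; exact hpL
    exact hpH this.2
  have hlt2 : Module.finrank F ↥(L ⊓ H) < 2 := by
    have := Submodule.finrank_lt_finrank_of_lt hlt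
    omega
  have hdim1 : Module.finrank F ↥(L ⊓ H) = 1 := by omega
  -- Step 2 : get a spanning vector q of L ⊓ H.
  obtain ⟨q, hqLH, hq0⟩ := (Submodule.ne_bot_iff (L ⊓ H)).1 (fun h => by
    rw [h] at hdim1; simp at hdim1)
  have hqL : q ∈ L := hqLH.1
  have hqH : q ∈ H := hqLH.2
  have hqq : ξ q q = 0 := (hH q).2 hqH
  have hspan : (L ⊓ H : Submodule F V) = Submodule.span F {q} := by
    refine (Submodule.eq_of_le_of_finrank_eq
      ((Submodule.span_singleton_le_iff_mem q _).2 hqLH) ?_).symm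
    rw [hdim1, finrank_span_singleton hq0]
  -- p and q are linearly independent
  have hpq_ind : ∀ a b : F, a • p + b • q = 0 → a = 0 ∧ b = 0 := by
    intro a b hab
    have ha : a = 0 := by
      by_contra ha
      have hp_eq : a • p = -(b • q) := eq_neg_of_add_eq_zero_left hab
      have : p = (a⁻¹ * (-b)) • q := by
        rw [mul_smul, neg_smul, ← hp_eq, smul_smul, inv_mul_cancel₀ ha, one_smul]
      exact hpH (this ▸ Submodule.smul_mem H _ hqH)
    rw [ha, zero_smul, zero_add] at hab
    have hb : b = 0 := by
      rcases smul_eq_zero.1 hab with h | h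
      · exact h
      · exact absurd h hq0
    exact ⟨ha, hb⟩
  -- Step 3 : L = span {p, q}
  have hLspan : L = Submodule.span F {p, q} := by
    refine (Submodule.eq_of_le_of_finrank_eq (Submodule.span_le.2 ?_) ?_).symm
    · rintro x (rfl | rfl)
      · exact hpL
      · exact hqL
    · rw [hL2]
      have : ({p, q} : Set V) = Set.range ![p, q] := by
        ext x
        simp [Matrix.range_cons, Matrix.range_empty, or_comm]
      rw [this, finrank_span_eq_card ?_]
      · simp
      · rw [LinearIndependent.pair_iff]
        intro a b hab
        exact hpq_ind a b hab
  -- The key scalar : ξ p q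
  constructor
  · -- regular → not contained
    intro hreg hle
    have hpq : ξ p q = 0 := by
      have : q ∈ ξ.orthogonal (Submodule.span F {p}) :=
        hle (hspan ▸ Submodule.mem_span_singleton_self q)
      exact this p (Submodule.mem_span_singleton_self p)
    have : q ∈ L ⊓ ξ.orthogonal L := by
      refine ⟨hqL, ?_⟩
      intro u huL
      rw [hLspan] at huL
      obtain ⟨a, b, rfl⟩ := Submodule.mem_span_pair.1 huL
      simp only [LinearMap.BilinForm.IsOrtho, map_add, map_smul, LinearMap.add_apply,
        LinearMap.smul_apply, smul_eq_mul]
      rw [hpq, hqq]; ring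
    rw [hreg] at this
    exact hq0 (by simpa using this)
  · -- not contained → regular
    intro hnle
    have hpq : ξ p q ≠ 0 := by
      intro hpq
      apply hnle
      rw [hspan]
      rw [Submodule.span_le]
      rintro x rfl
      intro n hn
      obtain ⟨c, rfl⟩ := Submodule.mem_span_singleton.1 hn
      simp only [LinearMap.BilinForm.IsOrtho, map_smul, LinearMap.smul_apply, smul_eq_mul]
      rw [hpq]; ring
    have hqp : ξ q p ≠ 0 := fun h => hpq (hrefl q p h)
    rw [Submodule.eq_bot_iff]
    rintro v ⟨hvL, hvO⟩
    rw [hLspan] at hvL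
    obtain ⟨a, b, rfl⟩ := Submodule.mem_span_pair.1 hvL
    have h1 : ξ q (a • p + b • q) = 0 := hvO q hqL
    have h2 : ξ p (a • p + b • q) = 0 := hvO p hpL
    simp only [map_add, map_smul, smul_eq_mul] at h1 h2
    rw [hqq, mul_zero, add_zero] at h1
    have ha : a = 0 := by
      rcases mul_eq_zero.1 h1 with h | h
      · exact h
      · exact absurd h hqp
    rw [ha, zero_mul, zero_add] at h2
    have hb : b = 0 := by
      rcases mul_eq_zero.1 h2 with h | h
      · exact h
      · exact absurd h hpq
    rw [ha, hb, zero_smul, zero_smul, add_zero]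
end

section
/- Let V be a finite-dimensional vector space with nondegenerate reflexive bilinear form ξ whose isotropic vectors form a hyperplane H, and let b be the pole of H, i.e. the 1-dimensional subspace with b^⊥ = H. If b ⊆ H, then every 2-dimensional subspace L with L ⊄ H and b ⊆ L is regular, while every 2-dimensional subspace of H containing b is non-regular. -/
open LinearMap.BilinForm in
/-- If the pole b of H lies on H, then each affine line with direction b is
regular and no line on H through b is regular. -/
theorem stmt7 {F V : Type*} [Field F] [AddCommGroup V] [Module F V]
    [FiniteDimensional F V] [CharP F 2] [PerfectField F]
    (ξ : LinearMap.BilinForm F V) (hnd : ξ.Nondegenerate) (hrefl : ξ.IsRefl)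
    (H : Submodule F V) (hH : ∀ v : V, ξ v v = 0 ↔ v ∈ H)
    (hHhyp : Module.finrank F H + 1 = Module.finrank F V)
    (b : Submodule F V) (hb1 : Module.finrank F b = 1)
    (hbpole : ξ.orthogonal b = H) (hbH : b ≤ H) :
    (∀ L : Submodule F V, Module.finrank F L = 2 → ¬ L ≤ H → b ≤ L →
      L ⊓ ξ.orthogonal L = ⊥) ∧
    (∀ L : Submodule F V, Module.finrank F L = 2 → L ≤ H → b ≤ L →
      L ⊓ ξ.orthogonal L ≠ ⊥) := by
  obtain ⟨e, heb, he0⟩ : ∃ e ∈ b, e ≠ 0 := by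
    by_contra h
    push_neg at h
    have hbbot : b = ⊥ := by
      ext x
      simp only [Submodule.mem_bot]
      exact ⟨fun hx => h x hx, fun hx => hx ▸ b.zero_mem⟩
    rw [hbbot] at hb1
    simp at hb1
  have hspan : Submodule.span F {e} = b :=
    Submodule.eq_of_le_of_finrank_le ((Submodule.span_singleton_le_iff_mem _ _).2 heb)
      (by rw [hb1, finrank_span_singleton he0])
  have key : ∀ v : V, ξ e v = 0 ↔ v ∈ H := by
    intro v
    rw [← hbpole, ← hspan]
    constructor
    · intro h n hn
      obtain ⟨c, rfl⟩ := Submodule.mem_span_singleton.1 hn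
      simp only [LinearMap.BilinForm.IsOrtho, map_smul, LinearMap.smul_apply, h, smul_zero]
    · intro h
      exact h e (Submodule.mem_span_singleton_self e)
  constructor
  · intro L hL2 hLH hbL
    obtain ⟨u, huL, huH⟩ : ∃ u ∈ L, u ∉ H := by
      by_contra h; push_neg at h; exact hLH h
    have hue : ξ u e ≠ 0 := fun h => huH ((key u).1 (hrefl u e h))
    have h1 : L ⊓ ξ.orthogonal L ≤ L ⊓ H := by
      rintro x ⟨hxL, hxO⟩
      exact ⟨hxL, (key x).1 (hxO e (hbL heb))⟩
    have hlt : L ⊓ H < L := by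
      refine lt_of_le_of_ne inf_le_left (fun h => huH ?_)
      exact ((le_of_eq h.symm) huL).2
    have hfr : Module.finrank F ↥(L ⊓ H) < 2 :=
      hL2 ▸ Submodule.finrank_lt_finrank_of_lt hlt
    have h2 : L ⊓ H ≤ b := by
      have : b = L ⊓ H :=
        Submodule.eq_of_le_of_finrank_le (le_inf hbL hbH) (by omega)
      exact this ▸ le_refl _
    rw [eq_bot_iff]
    rintro x hx
    have hxb : x ∈ Submodule.span F {e} := hspan ▸ h2 (h1 hx)
    obtain ⟨c, rfl⟩ := Submodule.mem_span_singleton.1 hxb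
    have hz : ξ u (c • e) = 0 := hx.2 u huL
    rw [map_smul, smul_eq_mul] at hz
    rcases mul_eq_zero.1 hz with hc | hc
    · simp [hc]
    · exact absurd hc hue
  · intro L hL2 hLH hbL hbot
    apply he0
    have heO : e ∈ ξ.orthogonal L := fun n hn => hrefl e n ((key n).2 (hLH hn))
    have hmem : e ∈ L ⊓ ξ.orthogonal L := ⟨hbL heb, heO⟩
    rw [hbot] at hmem
    exact hmem
end

section
/- Let V be a finite-dimensional vector space with nondegenerate reflexive bilinear form ξ whose isotropic vectors form a hyperplane H, and let b be the pole of H (b^⊥ = H). If b ⊄ H, then every 2-dimensional subspace L containing b with L ⊄ H is non-regular. -/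
open LinearMap.BilinForm in
/-- If the pole b of H does not lie on H, then no affine line through b is
regular. -/
theorem stmt8 {F V : Type*} [Field F] [AddCommGroup V] [Module F V]
    [FiniteDimensional F V] [CharP F 2] [PerfectField F]
    (ξ : LinearMap.BilinForm F V) (hnd : ξ.Nondegenerate) (hrefl : ξ.IsRefl)
    (H : Submodule F V) (hH : ∀ v : V, ξ v v = 0 ↔ v ∈ H)
    (hHhyp : Module.finrank F H + 1 = Module.finrank F V)
    (b : Submodule F V) (hb1 : Module.finrank F b = 1)
    (hbpole : ξ.orthogonal b = H) (hbH : ¬ b ≤ H) :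
    ∀ L : Submodule F V, Module.finrank F L = 2 → b ≤ L → ¬ L ≤ H →
      L ⊓ ξ.orthogonal L ≠ ⊥ := by
  intro L hL2 hbL hLH
  -- dimension count: L ⊓ H is nontrivial
  have h1 := Submodule.finrank_sup_add_finrank_inf_eq L H
  have h2 : Module.finrank F ↥(L ⊔ H) ≤ Module.finrank F V :=
    Submodule.finrank_le _
  have hpos : 0 < Module.finrank F ↥(L ⊓ H) := by omega
  have hne : L ⊓ H ≠ ⊥ := by
    intro h
    rw [h, finrank_bot] at hpos
    exact lt_irrefl 0 hpos
  obtain ⟨x, hx, hx0⟩ := Submodule.exists_mem_ne_zero_of_ne_bot hne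
  have hxL : x ∈ L := hx.1
  have hxH : x ∈ H := hx.2
  -- helper: b equals the span of any of its nonzero elements
  have hbspan : ∀ y : V, y ∈ b → y ≠ 0 → b = Submodule.span F {y} := by
    intro y hyb hy0
    refine (Submodule.eq_of_le_of_finrank_le
      ((Submodule.span_singleton_le_iff_mem y b).2 hyb) ?_).symm
    rw [hb1, finrank_span_singleton hy0]
  -- x ∉ b
  have hxb : x ∉ b := by
    intro hxb
    apply hbH
    rw [hbspan x hxb hx0]
    exact (Submodule.span_singleton_le_iff_mem x H).2 hxH
  -- b ⊓ span x = ⊥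
  have hinf : b ⊓ Submodule.span F {x} = ⊥ := by
    rw [Submodule.eq_bot_iff]
    intro y ⟨hyb, hys⟩
    by_contra hy0
    obtain ⟨c, hc⟩ := Submodule.mem_span_singleton.1 hys
    have hc0 : c ≠ 0 := by rintro rfl; simp at hc; exact hy0 hc.symm
    exact hxb (by
      have : x = c⁻¹ • y := by rw [← hc, smul_smul, inv_mul_cancel₀ hc0, one_smul]
      rw [this]; exact Submodule.smul_mem b _ hyb)
  -- L = b ⊔ span x
  have hsup : b ⊔ Submodule.span F {x} = L := by
    apply Submodule.eq_of_le_of_finrank_le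
      (sup_le hbL ((Submodule.span_singleton_le_iff_mem x L).2 hxL))
    have h3 := Submodule.finrank_sup_add_finrank_inf_eq b (Submodule.span F {x})
    rw [hinf, finrank_bot, hb1, finrank_span_singleton hx0] at h3
    omega
  -- x is orthogonal to everything in L
  have hxorth : x ∈ ξ.orthogonal L := by
    intro u hu
    rw [← hsup] at hu
    obtain ⟨y, hyb, z, hzs, rfl⟩ := Submodule.mem_sup.1 hu
    obtain ⟨c, rfl⟩ := Submodule.mem_span_singleton.1 hzs
    have hy : ξ y x = 0 := by
      have := hbpole ▸ hxH
      exact this y hyb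
    have hxx : ξ x x = 0 := (hH x).2 hxH
    simp [LinearMap.BilinForm.IsOrtho, hy, hxx]
  intro h
  have : x ∈ L ⊓ ξ.orthogonal L := ⟨hxL, hxorth⟩
  rw [h] at this
  exact hx0 (Submodule.mem_bot F |>.1 this)
end

section
/- Let V be a finite-dimensional vector space with nondegenerate reflexive bilinear form ξ whose isotropic vectors form a hyperplane H, and let A be a 3-dimensional subspace not contained in H. Then A is regular if and only if the 2-dimensional subspace A ∩ H is regular with respect to the restriction of ξ to H. -/
open LinearMap.BilinForm in
/-- A plane A ⊄ H is regular iff the line A ∩ H is regular. -/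
theorem stmt9 {F V : Type*} [Field F] [AddCommGroup V] [Module F V]
    [FiniteDimensional F V] [CharP F 2] [PerfectField F]
    (ξ : LinearMap.BilinForm F V) (hnd : ξ.Nondegenerate) (hrefl : ξ.IsRefl)
    (H : Submodule F V) (hH : ∀ v : V, ξ v v = 0 ↔ v ∈ H)
    (hHhyp : Module.finrank F H + 1 = Module.finrank F V)
    (A : Submodule F V) (hA3 : Module.finrank F A = 3) (hA : ¬ A ≤ H) :
    A ⊓ ξ.orthogonal A = ⊥ ↔ (A ⊓ H) ⊓ ξ.orthogonal (A ⊓ H) = ⊥ := by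
  classical
  have hzero : (0 : V) ∈ H := (hH 0).mp (by simp)
  -- A ⊔ H = ⊤
  have hAH : A ⊔ H = ⊤ := by
    have hlt : H < A ⊔ H := lt_of_le_of_ne le_sup_right
      (fun h => hA (le_sup_left.trans h.symm.le))
    have h1 : Module.finrank F H < Module.finrank F (A ⊔ H : Submodule F V) :=
      Submodule.finrank_lt_finrank_of_lt hlt
    have h2 : Module.finrank F (A ⊔ H : Submodule F V) ≤ Module.finrank F V :=
      Submodule.finrank_le _
    exact Submodule.eq_top_of_finrank_eq (by omega)
  -- finrank (A ⊓ H) = 2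
  have hB2 : Module.finrank F (A ⊓ H : Submodule F V) = 2 := by
    have := Submodule.finrank_sup_add_finrank_inf_eq A H
    rw [hAH, finrank_top] at this
    omega
  constructor
  · -- A regular → A ⊓ H regular
    intro hreg
    rw [eq_bot_iff]
    intro x hx
    rw [Submodule.mem_bot]
    obtain ⟨hxB, hxO⟩ := Submodule.mem_inf.mp hx
    by_contra hx0
    obtain ⟨hxA, hxH⟩ := Submodule.mem_inf.mp hxB
    have hxx : ξ x x = 0 := (hH x).mpr hxH
    obtain ⟨a, haA, haH⟩ : ∃ a ∈ A, a ∉ H := by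
      by_contra h
      push_neg at h
      exact hA h
    have ha0 : a ≠ 0 := fun h => haH (h ▸ hzero)
    have hxOrth : ∀ n ∈ A ⊓ H, ξ n x = 0 := by
      intro n hn
      exact (mem_orthogonal_iff.mp hxO) n hn
    -- A = span a ⊔ (A ⊓ H)
    have hinf : Submodule.span F {a} ⊓ (A ⊓ H) = ⊥ := by
      rw [eq_bot_iff]
      intro y hy
      obtain ⟨hy1, hy2⟩ := Submodule.mem_inf.mp hy
      obtain ⟨c, rfl⟩ := Submodule.mem_span_singleton.mp hy1
      rcases eq_or_ne c 0 with hc | hc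
      · simp [hc]
      · exfalso
        apply haH
        have : c⁻¹ • (c • a) ∈ H := Submodule.smul_mem H _ hy2.2
        rwa [smul_smul, inv_mul_cancel₀ hc, one_smul] at this
    have hsupA : Submodule.span F {a} ⊔ (A ⊓ H) = A := by
      apply Submodule.eq_of_le_of_finrank_le
      · exact sup_le (Submodule.span_le.mpr (by simpa using haA)) inf_le_left
      · have := Submodule.finrank_sup_add_finrank_inf_eq (Submodule.span F {a}) (A ⊓ H)
        rw [hinf, finrank_bot, finrank_span_singleton ha0, hB2] at this
        omega
    rcases eq_or_ne (ξ a x) 0 with hax | hax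
    · -- then x ∈ A ⊓ orthogonal A = ⊥, contradiction
      have hxOA : x ∈ ξ.orthogonal A := by
        rw [mem_orthogonal_iff]
        intro n hn
        rw [← hsupA] at hn
        obtain ⟨y, hy, z, hz, rfl⟩ := Submodule.mem_sup.mp hn
        obtain ⟨c, rfl⟩ := Submodule.mem_span_singleton.mp hy
        have hz0 : ξ z x = 0 := hxOrth z hz
        show ξ (c • a + z) x = 0
        simp [hax, hz0]
      have : x ∈ (⊥ : Submodule F V) := hreg ▸ Submodule.mem_inf.mpr ⟨hxA, hxOA⟩
      exact hx0 (Submodule.mem_bot F |>.mp this)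
    · -- pick b with A ⊓ H = span x ⊔ span b
      have hsxlt : Submodule.span F {x} < A ⊓ H := by
        refine lt_of_le_of_ne (Submodule.span_le.mpr (by simpa using hxB)) ?_
        intro h
        have := hB2
        rw [← h, finrank_span_singleton hx0] at this
        omega
      obtain ⟨b, hbB, hbx⟩ := SetLike.exists_of_lt hsxlt
      have hb0 : b ≠ 0 := fun h => hbx (h ▸ Submodule.zero_mem _)
      obtain ⟨hbA, hbH⟩ := Submodule.mem_inf.mp hbB
      have hinf2 : Submodule.span F {x} ⊓ Submodule.span F {b} = ⊥ := by
        rw [eq_bot_iff]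
        intro y hy
        obtain ⟨hy1, hy2⟩ := Submodule.mem_inf.mp hy
        obtain ⟨c, rfl⟩ := Submodule.mem_span_singleton.mp hy2
        rcases eq_or_ne c 0 with hc | hc
        · simp [hc]
        · exfalso
          apply hbx
          have : c⁻¹ • (c • b) ∈ Submodule.span F {x} := Submodule.smul_mem _ _ hy1
          rwa [smul_smul, inv_mul_cancel₀ hc, one_smul] at this
      have hsupB : Submodule.span F {x} ⊔ Submodule.span F {b} = A ⊓ H := by
        apply Submodule.eq_of_le_of_finrank_le
        · exact sup_le (Submodule.span_le.mpr (by simpa using hxB))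
            (Submodule.span_le.mpr (by simpa using hbB))
        · have := Submodule.finrank_sup_add_finrank_inf_eq
            (Submodule.span F {x}) (Submodule.span F {b})
          rw [hinf2, finrank_bot, finrank_span_singleton hx0,
            finrank_span_singleton hb0] at this
          omega
      -- orthogonality facts
      have hbx0 : ξ b x = 0 := hxOrth b hbB
      have hxb0 : ξ x b = 0 := hrefl b x hbx0
      have hbb : ξ b b = 0 := (hH b).mpr hbH
      set u : V := ξ a b • x - ξ a x • b with hu
      have hu0 : u ≠ 0 := by
        intro h
        apply hbx
        rw [hu, sub_eq_zero] at h
        refine Submodule.mem_span_singleton.mpr ⟨(ξ a x)⁻¹ * ξ a b, ?_⟩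
        rw [mul_smul, h, smul_smul, inv_mul_cancel₀ hax, one_smul]
      have huA : u ∈ A := Submodule.sub_mem A (Submodule.smul_mem A _ hxA)
        (Submodule.smul_mem A _ hbA)
      have hau : ξ a u = 0 := by
        rw [hu]
        simp only [map_sub, map_smul, smul_eq_mul]
        ring
      have hxu : ξ x u = 0 := by
        rw [hu]
        simp [hxx, hxb0]
      have hbu : ξ b u = 0 := by
        rw [hu]
        simp [hbx0, hbb]
      have huO : u ∈ ξ.orthogonal A := by
        rw [mem_orthogonal_iff]
        intro n hn
        rw [← hsupA] at hn
        obtain ⟨y, hy, z, hz, rfl⟩ := Submodule.mem_sup.mp hn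
        obtain ⟨c, rfl⟩ := Submodule.mem_span_singleton.mp hy
        rw [← hsupB] at hz
        obtain ⟨y', hy', z', hz', rfl⟩ := Submodule.mem_sup.mp hz
        obtain ⟨e, rfl⟩ := Submodule.mem_span_singleton.mp hy'
        obtain ⟨f, rfl⟩ := Submodule.mem_span_singleton.mp hz'
        show ξ (c • a + (e • x + f • b)) u = 0
        simp [hau, hxu, hbu]
      have : u ∈ (⊥ : Submodule F V) := hreg ▸ Submodule.mem_inf.mpr ⟨huA, huO⟩
      exact hu0 (Submodule.mem_bot F |>.mp this)
  · -- A ⊓ H regular → A regular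
    intro hreg
    rw [eq_bot_iff]
    intro x hx
    obtain ⟨hxA, hxO⟩ := Submodule.mem_inf.mp hx
    have hxx : ξ x x = 0 := (mem_orthogonal_iff.mp hxO) x hxA
    have hxH : x ∈ H := (hH x).mp hxx
    have hxB : x ∈ A ⊓ H := Submodule.mem_inf.mpr ⟨hxA, hxH⟩
    have hxOB : x ∈ ξ.orthogonal (A ⊓ H) := by
      rw [mem_orthogonal_iff]
      intro n hn
      exact (mem_orthogonal_iff.mp hxO) n (Submodule.mem_inf.mp hn).1
    exact hreg ▸ Submodule.mem_inf.mpr ⟨hxB, hxOB⟩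
end

section
/- Let V be a finite-dimensional vector space with nondegenerate reflexive bilinear form ξ whose isotropic vectors form a hyperplane H. If A is a 3-dimensional subspace not contained in H such that A contains two distinct 2-dimensional non-regular subspaces M₁, M₂ with M₁ ∩ H = M₂ ∩ H (parallel non-regular lines with the same direction), then A is non-regular. -/
open LinearMap.BilinForm in
/-- If a plane A ⊄ H contains two distinct parallel nonregular affine lines
then A is nonregular. -/
theorem stmt11 {F V : Type*} [Field F] [AddCommGroup V] [Module F V]
    [FiniteDimensional F V] [CharP F 2] [PerfectField F]
    (ξ : LinearMap.BilinForm F V) (hnd : ξ.Nondegenerate) (hrefl : ξ.IsRefl)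
    (H : Submodule F V) (hH : ∀ v : V, ξ v v = 0 ↔ v ∈ H)
    (hHhyp : Module.finrank F H + 1 = Module.finrank F V)
    (A : Submodule F V) (hA3 : Module.finrank F A = 3) (hA : ¬ A ≤ H)
    (M₁ M₂ : Submodule F V) (hM₁A : M₁ ≤ A) (hM₂A : M₂ ≤ A)
    (hM₁2 : Module.finrank F M₁ = 2) (hM₂2 : Module.finrank F M₂ = 2)
    (hMne : M₁ ≠ M₂) (hM₁H : ¬ M₁ ≤ H) (hM₂H : ¬ M₂ ≤ H)
    (hM₁nr : M₁ ⊓ ξ.orthogonal M₁ ≠ ⊥) (hM₂nr : M₂ ⊓ ξ.orthogonal M₂ ≠ ⊥)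
    (hpar : M₁ ⊓ H = M₂ ⊓ H) :
    A ⊓ ξ.orthogonal A ≠ ⊥ := by
  classical
  have hpos : ∀ S : Submodule F V, S ≠ ⊥ → 0 < Module.finrank F S := fun S hS =>
    Nat.pos_of_ne_zero (fun h => hS (Submodule.finrank_eq_zero.mp h))
  set D : Submodule F V := M₁ ⊓ H with hD
  -- each radical consists of isotropic vectors, hence lies in D
  have hr1D : M₁ ⊓ ξ.orthogonal M₁ ≤ D := by
    rintro r ⟨hr1, hr2⟩
    exact ⟨hr1, (hH r).1 (hr2 r hr1)⟩
  have hr2D : M₂ ⊓ ξ.orthogonal M₂ ≤ D := by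
    rintro r ⟨hr1, hr2⟩
    have h2 : r ∈ M₂ ⊓ H := ⟨hr1, (hH r).1 (hr2 r hr1)⟩
    show r ∈ D; rw [hpar]; exact h2
  -- D has dimension exactly 1
  have hDneM : D ≠ M₁ := by
    intro h
    exact hM₁H (h ▸ inf_le_right)
  have hDle : Module.finrank F D ≤ 1 := by
    have : D < M₁ := lt_of_le_of_ne inf_le_left hDneM
    have := Submodule.finrank_lt_finrank_of_lt this
    omega
  have hDpos : 0 < Module.finrank F D := by
    refine hpos D (fun h => ?_)
    rcases Submodule.ne_bot_iff _ |>.1 hM₁nr with ⟨x, hx, hx0⟩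
    exact hx0 (Submodule.mem_bot F |>.1 (h ▸ hr1D hx))
  have hD1 : Module.finrank F D = 1 := le_antisymm hDle hDpos
  -- the radicals equal D
  have hr1pos : 0 < Module.finrank F ↥(M₁ ⊓ ξ.orthogonal M₁) := hpos _ hM₁nr
  have hr2pos : 0 < Module.finrank F ↥(M₂ ⊓ ξ.orthogonal M₂) := hpos _ hM₂nr
  have hr1eq : M₁ ⊓ ξ.orthogonal M₁ = D :=
    Submodule.eq_of_le_of_finrank_le hr1D (by omega)
  have hr2eq : M₂ ⊓ ξ.orthogonal M₂ = D :=
    Submodule.eq_of_le_of_finrank_le hr2D (by omega)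
  -- A = M₁ ⊔ M₂
  have hMMne : M₁ ⊓ M₂ ≠ M₁ := by
    intro h
    exact hMne (Submodule.eq_of_le_of_finrank_le (h ▸ inf_le_right) (by omega))
  have hMMle : Module.finrank F (M₁ ⊓ M₂ : Submodule F V) ≤ 1 := by
    have : M₁ ⊓ M₂ < M₁ := lt_of_le_of_ne inf_le_left hMMne
    have := Submodule.finrank_lt_finrank_of_lt this
    omega
  have hsup : Module.finrank F (M₁ ⊔ M₂ : Submodule F V)
      + Module.finrank F (M₁ ⊓ M₂ : Submodule F V)
      = Module.finrank F M₁ + Module.finrank F M₂ :=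
    Submodule.finrank_sup_add_finrank_inf_eq M₁ M₂
  have hAeq : M₁ ⊔ M₂ = A := by
    have hle : M₁ ⊔ M₂ ≤ A := sup_le hM₁A hM₂A
    have hfr : Module.finrank F A ≤ Module.finrank F (M₁ ⊔ M₂ : Submodule F V) := by
      omega
    exact (Submodule.eq_of_le_of_finrank_le hle hfr)
  -- pick a nonzero vector in D
  have hDne : D ≠ ⊥ := by
    intro h
    rw [h] at hD1
    simp at hD1
  rcases (Submodule.ne_bot_iff D).1 hDne with ⟨d, hdD, hd0⟩
  have hd1 : d ∈ ξ.orthogonal M₁ := (hr1eq ▸ hdD : d ∈ M₁ ⊓ ξ.orthogonal M₁).2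
  have hd2 : d ∈ ξ.orthogonal M₂ := (hr2eq ▸ hdD : d ∈ M₂ ⊓ ξ.orthogonal M₂).2
  have hdA : d ∈ A := hM₁A (hr1eq ▸ hdD : d ∈ M₁ ⊓ ξ.orthogonal M₁).1
  have hdorth : d ∈ ξ.orthogonal A := by
    intro n hn
    rw [← hAeq] at hn
    rcases Submodule.mem_sup.1 hn with ⟨n₁, hn₁, n₂, hn₂, rfl⟩
    have h1 : ξ n₁ d = 0 := hd1 n₁ hn₁
    have h2 : ξ n₂ d = 0 := hd2 n₂ hn₂
    show ξ (n₁ + n₂) d = 0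
    rw [map_add, LinearMap.add_apply, h1, h2, add_zero]
  intro h
  have : d ∈ (⊥ : Submodule F V) := h ▸ ⟨hdA, hdorth⟩
  exact hd0 (Submodule.mem_bot F |>.1 this)
end

section
/- Let V be a finite-dimensional vector space with nondegenerate reflexive bilinear form ξ whose isotropic vectors form a hyperplane H, and let A be a 3-dimensional subspace not contained in H with L := A ∩ H. If L is regular, then A is regular, Hrd(A) := A ∩ L^⊥ is a 1-dimensional subspace p not contained in H, and a 2-dimensional subspace K ⊆ A with K ⊄ H is non-regular if and only if p ⊆ K. -/
/-!
Every vector of a radical is isotropic, so the radical of any subspace `W` lies in `W ∩ H`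
and is orthogonal to it; in particular `rad A ≤ rad L = 0`. Since `L` is a regular plane in the
`3`-space `A`, `A = L ⊕ (A ∩ L^⊥)` and `A ∩ L^⊥` is a line `⟨p⟩` with `p ∉ H`. For a plane
`K ≤ A` off `H`, `rad K` sits in the isotropic line `K ∩ H`, so `K` is nonregular iff
`K ∩ H ⊥ K`. As `K ∩ H ⊥ p`, this holds when `K = (K ∩ H) + ⟨p⟩`; and if `p ∉ K` then
`A = K + ⟨p⟩`, so `K ∩ H ⊥ K` would put `K ∩ H` into `rad A = 0`.
-/

open Module Submodule

section Finrank

variable {F V : Type*} [Field F] [AddCommGroup V] [Module F V]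

lemma exists_eq_span_singleton_of_finrank_eq_one {S : Submodule F V}
    (hS : finrank F S = 1) : ∃ p ≠ 0, S = span F {p} := by
  obtain ⟨p, hp, hp0⟩ := S.exists_mem_ne_zero_of_ne_bot (by rintro rfl; simp at hS)
  exact ⟨p, hp0, eq_span_singleton_of_mem_of_finrank_eq_one hS hp hp0⟩

variable [FiniteDimensional F V]

lemma finrank_inf_add_one_of_not_le {H W : Submodule F V}
    (hH : finrank F H + 1 = finrank F V) (hW : ¬ W ≤ H) :
    finrank F (W ⊓ H : Submodule F V) + 1 = finrank F W := by
  have hlt : finrank F H < finrank F (W ⊔ H : Submodule F V) :=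
    finrank_lt_finrank_of_lt (right_lt_sup.2 hW)
  have := finrank_sup_add_finrank_inf_eq W H
  have := (W ⊔ H).finrank_le
  omega

lemma eq_sup_span_singleton_of_finrank_add_one {W K : Submodule F V} {p : V}
    (hWK : W ≤ K) (hK : finrank F W + 1 = finrank F K) (hpK : p ∈ K) (hpW : p ∉ W) :
    K = W ⊔ span F {p} :=
  (eq_of_le_of_finrank_le (sup_le hWK ((span_singleton_le_iff_mem _ _).2 hpK))
    (by rw [finrank_sup_span_singleton hpW, hK])).symm

end Finrank

namespace LinearMap.BilinForm

variable {F V : Type*} [Field F] [AddCommGroup V] [Module F V] {ξ : LinearMap.BilinForm F V}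

lemma orthogonal_sup (Y Z : Submodule F V) :
    ξ.orthogonal (Y ⊔ Z) = ξ.orthogonal Y ⊓ ξ.orthogonal Z := by
  refine le_antisymm (le_inf (orthogonal_le le_sup_left) (orthogonal_le le_sup_right)) ?_
  rintro x ⟨hY, hZ⟩ n hn
  obtain ⟨y, hy, z, hz, rfl⟩ := mem_sup.1 hn
  simp [hY y hy, hZ z hz]

lemma le_orthogonal_comm (hrefl : ξ.IsRefl) {X Y : Submodule F V} :
    X ≤ ξ.orthogonal Y ↔ Y ≤ ξ.orthogonal X :=
  ⟨fun h _ hy _ hx => hrefl _ _ (h hx _ hy), fun h _ hx _ hy => hrefl _ _ (h hy _ hx)⟩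

lemma le_orthogonal_self_of_finrank_eq_one {R : Submodule F V} (hR : finrank F R = 1)
    (hiso : ∀ v ∈ R, ξ v v = 0) : R ≤ ξ.orthogonal R := by
  obtain ⟨q, -, rfl⟩ := exists_eq_span_singleton_of_finrank_eq_one hR
  rw [span_singleton_le_iff_mem]
  intro n hn
  obtain ⟨a, rfl⟩ := mem_span_singleton.1 hn
  simp [hiso q (mem_span_singleton_self q)]

variable {H : Submodule F V}

lemma inf_orthogonal_self_le_inf (hH : ∀ v, ξ v v = 0 → v ∈ H) (W : Submodule F V) :
    W ⊓ ξ.orthogonal W ≤ W ⊓ H :=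
  fun v hv => ⟨hv.1, hH v (hv.2 v hv.1)⟩

lemma inf_orthogonal_self_le_of_isotropic (hH : ∀ v, ξ v v = 0 → v ∈ H) (W : Submodule F V) :
    W ⊓ ξ.orthogonal W ≤ (W ⊓ H) ⊓ ξ.orthogonal (W ⊓ H) :=
  le_inf (inf_orthogonal_self_le_inf hH W) (inf_le_right.trans (orthogonal_le inf_le_left))

variable [FiniteDimensional F V]

lemma finrank_inf_orthogonal_add_finrank (hnd : ξ.Nondegenerate) {W A : Submodule F V}
    (hWA : W ≤ A) (hW : W ⊓ ξ.orthogonal W = ⊥) :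
    finrank F (A ⊓ ξ.orthogonal W : Submodule F V) + finrank F W = finrank F A := by
  have hdisj : (A ⊓ ξ.orthogonal W) ⊓ W = ⊥ :=
    eq_bot_iff.2 fun x hx => hW ▸ ⟨hx.2, hx.1.2⟩
  have hupper := finrank_sup_add_finrank_inf_eq (A ⊓ ξ.orthogonal W) W
  rw [hdisj, finrank_bot] at hupper
  have := finrank_mono (sup_le (inf_le_left : A ⊓ ξ.orthogonal W ≤ A) hWA)
  have hlower := finrank_sup_add_finrank_inf_eq A (ξ.orthogonal W)
  rw [finrank_orthogonal hnd] at hlower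
  have := (A ⊔ ξ.orthogonal W).finrank_le
  have := W.finrank_le
  omega

lemma inf_orthogonal_self_ne_bot_iff (hH : ∀ v, ξ v v = 0 → v ∈ H) {K : Submodule F V}
    (hKH : finrank F (K ⊓ H : Submodule F V) = 1) :
    K ⊓ ξ.orthogonal K ≠ ⊥ ↔ K ⊓ H ≤ ξ.orthogonal K := by
  have hKH0 : K ⊓ H ≠ ⊥ := one_le_finrank_iff.1 hKH.ge
  constructor
  · intro hrad
    have heq : K ⊓ ξ.orthogonal K = K ⊓ H :=
      eq_of_le_of_finrank_le (inf_orthogonal_self_le_inf hH K)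
        (hKH ▸ one_le_finrank_iff.2 hrad)
    exact heq ▸ inf_le_right
  · intro hle hrad
    exact hKH0 (eq_bot_iff.2 (hrad ▸ le_inf inf_le_left hle))

lemma le_orthogonal_iff_mem (hrefl : ξ.IsRefl) {R K A : Submodule F V} {p : V}
    (hA : A ⊓ ξ.orthogonal A = ⊥) (hRK : R ≤ K) (hKA : K ≤ A)
    (hR : finrank F R + 1 = finrank F K) (hK : finrank F K + 1 = finrank F A)
    (hR0 : R ≠ ⊥) (hRiso : R ≤ ξ.orthogonal R) (hpA : p ∈ A) (hpR : p ∉ R)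
    (hRp : p ∈ ξ.orthogonal R) :
    R ≤ ξ.orthogonal K ↔ p ∈ K := by
  rw [← span_singleton_le_iff_mem, ← le_orthogonal_comm hrefl] at hRp
  constructor
  · intro hRK'
    by_contra hpK
    have hAeq := eq_sup_span_singleton_of_finrank_add_one hKA hK hpA hpK
    refine hR0 (eq_bot_iff.2 (hA ▸ le_inf (hRK.trans hKA) ?_))
    rw [hAeq, orthogonal_sup]
    exact le_inf hRK' hRp
  · intro hpK
    rw [eq_sup_span_singleton_of_finrank_add_one hRK hR hpK hpR, orthogonal_sup]
    exact le_inf hRiso hRp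

end LinearMap.BilinForm

open LinearMap.BilinForm in
theorem stmt12_general {F V : Type*} [Field F] [AddCommGroup V] [Module F V]
    [FiniteDimensional F V]
    (ξ : LinearMap.BilinForm F V) (hnd : ξ.Nondegenerate) (hrefl : ξ.IsRefl)
    (H : Submodule F V) (hH : ∀ v : V, ξ v v = 0 ↔ v ∈ H)
    (hHhyp : Module.finrank F H + 1 = Module.finrank F V)
    (A : Submodule F V) (hA3 : Module.finrank F A = 3) (hA : ¬ A ≤ H)
    (hLreg : (A ⊓ H) ⊓ ξ.orthogonal (A ⊓ H) = ⊥) :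
    A ⊓ ξ.orthogonal A = ⊥ ∧
      ∃ p : V, p ≠ 0 ∧ A ⊓ ξ.orthogonal (A ⊓ H) = Submodule.span F {p} ∧ p ∉ H ∧
        ∀ K : Submodule F V, K ≤ A → Module.finrank F K = 2 → ¬ K ≤ H →
          (K ⊓ ξ.orthogonal K ≠ ⊥ ↔ p ∈ K) := by
  have hL := finrank_inf_add_one_of_not_le hHhyp hA
  have hAreg : A ⊓ ξ.orthogonal A = ⊥ :=
    eq_bot_iff.2 ((inf_orthogonal_self_le_of_isotropic (fun v => (hH v).1) A).trans hLreg.le)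
  have hHrd := finrank_inf_orthogonal_add_finrank hnd (inf_le_left : A ⊓ H ≤ A) hLreg
  obtain ⟨p, hp0, hP⟩ := exists_eq_span_singleton_of_finrank_eq_one
    (S := A ⊓ ξ.orthogonal (A ⊓ H)) (by omega)
  have hpP : p ∈ A ⊓ ξ.orthogonal (A ⊓ H) := hP ▸ mem_span_singleton_self p
  have hpH : p ∉ H := by
    intro hpH
    have hpL : p ∈ (A ⊓ H) ⊓ ξ.orthogonal (A ⊓ H) := ⟨⟨hpP.1, hpH⟩, hpP.2⟩
    rw [hLreg] at hpL
    exact hp0 hpL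
  refine ⟨hAreg, p, hp0, hP, hpH, fun K hKA hK2 hKH => ?_⟩
  have hKH1 : finrank F (K ⊓ H : Submodule F V) = 1 := by
    have := finrank_inf_add_one_of_not_le hHhyp hKH
    omega
  rw [inf_orthogonal_self_ne_bot_iff (fun v => (hH v).1) hKH1]
  have hR : finrank F (K ⊓ H : Submodule F V) + 1 = finrank F K := by omega
  have hK : finrank F K + 1 = finrank F A := by omega
  refine le_orthogonal_iff_mem hrefl hAreg inf_le_left hKA hR hK
    (one_le_finrank_iff.1 hKH1.ge)
    (le_orthogonal_self_of_finrank_eq_one hKH1 fun v hv => (hH v).2 hv.2) hpP.1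
    (fun h => hpH h.2) (LinearMap.BilinForm.orthogonal_le (inf_le_inf_right H hKA) hpP.2)

open LinearMap.BilinForm in
/-- If A ⊄ H is a plane with A ∩ H regular, then A is regular, Hrd(A) is a
point p off H, and an affine line K on A is nonregular iff p ∈ K. -/
theorem stmt12 {F V : Type*} [Field F] [AddCommGroup V] [Module F V]
    [FiniteDimensional F V] [CharP F 2] [PerfectField F]
    (ξ : LinearMap.BilinForm F V) (hnd : ξ.Nondegenerate) (hrefl : ξ.IsRefl)
    (H : Submodule F V) (hH : ∀ v : V, ξ v v = 0 ↔ v ∈ H)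
    (hHhyp : Module.finrank F H + 1 = Module.finrank F V)
    (A : Submodule F V) (hA3 : Module.finrank F A = 3) (hA : ¬ A ≤ H)
    (hLreg : (A ⊓ H) ⊓ ξ.orthogonal (A ⊓ H) = ⊥) :
    A ⊓ ξ.orthogonal A = ⊥ ∧
      ∃ p : V, p ≠ 0 ∧ A ⊓ ξ.orthogonal (A ⊓ H) = Submodule.span F {p} ∧ p ∉ H ∧
        ∀ K : Submodule F V, K ≤ A → Module.finrank F K = 2 → ¬ K ≤ H →
          (K ⊓ ξ.orthogonal K ≠ ⊥ ↔ p ∈ K) :=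
  stmt12_general ξ hnd hrefl H hH hHhyp A hA3 hA hLreg
end

section
/- Let V be a finite-dimensional vector space over a perfect field of characteristic 2 with nondegenerate reflexive bilinear form ξ whose isotropic vectors form a hyperplane H, and let L₁, L₂ be distinct regular 2-dimensional subspaces with L₁ ∩ L₂ = span(p) for a nonzero p ∉ H. Then the 3-dimensional subspace A = L₁ + L₂ is non-regular if and only if (L₁ ∩ H) ⊥ (L₂ ∩ H). -/
/-!
Let `qᵢ` span the isotropic line `Lᵢ ∩ H`, so that `Lᵢ = ⟨p, qᵢ⟩` and `A = ⟨p, q₁, q₂⟩` with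
`A ∩ H = ⟨q₁, q₂⟩`, since `p ∉ H`. A radical vector of `A` is isotropic, so it lies in
`⟨q₁, q₂⟩`; if `ξ q₁ q₂ ≠ 0` this plane is hyperbolic, hence regular, and the radical is trivial.
If `ξ q₁ q₂ = 0` the plane `⟨q₁, q₂⟩` is totally isotropic, and the kernel of `ξ p` on it is
nonzero by dimension count: it lies in the radical of `A`.
-/

open Module

namespace Submodule

variable {F V : Type*} [Field F] [AddCommGroup V] [Module F V] {H K L : Submodule F V} {p : V}

theorem span_singleton_sup_inf_eq_of_le (hp : p ∉ H) (hK : K ≤ H) :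
    (span F {p} ⊔ K) ⊓ H = K := by
  rw [sup_comm, sup_inf_assoc_of_le _ hK, inf_comm,
    (disjoint_span_singleton_of_notMem hp).eq_bot, sup_bot_eq]

theorem exists_mem_span_pair_ne_zero_apply_eq_zero {q₁ q₂ : V}
    (hq : LinearIndependent F ![q₁, q₂]) (f : V →ₗ[F] F) :
    ∃ v ∈ span F {q₁, q₂}, v ≠ 0 ∧ f v = 0 := by
  have hP : finrank F (span F {q₁, q₂}) = 2 := by
    rw [← Matrix.range_cons_cons_empty q₁ q₂ ![], finrank_span_eq_card hq, Fintype.card_fin]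
  have : FiniteDimensional F (span F {q₁, q₂}) := .span_of_finite F (Set.toFinite _)
  obtain ⟨⟨v, hv⟩, hker, hv0⟩ := exists_mem_ne_zero_of_ne_bot
    ((f.domRestrict _).ker_ne_bot_of_finrank_lt (by rw [hP, finrank_self]; norm_num))
  exact ⟨v, hv, by simpa using hv0, hker⟩

variable [FiniteDimensional F V]

theorem span_singleton_sup_eq_top_of_finrank_add_one (hH : finrank F H + 1 = finrank F V)
    (hp : p ∉ H) : span F {p} ⊔ H = ⊤ := by
  rw [sup_comm, sup_span_singleton_eq_top_iff hp]
  have := H.finrank_quotient_add_finrank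
  omega

theorem span_singleton_sup_inf_eq (hH : finrank F H + 1 = finrank F V) (hp : p ∉ H)
    (hpL : p ∈ L) : span F {p} ⊔ L ⊓ H = L := by
  rw [inf_comm, ← sup_inf_assoc_of_le H ((span_singleton_le_iff_mem p L).mpr hpL),
    span_singleton_sup_eq_top_of_finrank_add_one hH hp, top_inf_eq]

theorem exists_inf_eq_span_singleton (hH : finrank F H + 1 = finrank F V) (hp : p ∉ H)
    (hpL : p ∈ L) (hL : finrank F L = 2) : ∃ q ≠ 0, L ⊓ H = span F {q} := by
  have hp0 : p ≠ 0 := fun h ↦ hp (h ▸ H.zero_mem)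
  have hdim := finrank_sup_add_finrank_inf_eq (span F {p}) (L ⊓ H)
  rw [span_singleton_sup_inf_eq hH hp hpL, hL, finrank_span_singleton hp0,
    ((disjoint_span_singleton_of_notMem hp).symm.mono_right inf_le_right).eq_bot,
    finrank_bot] at hdim
  obtain ⟨q, hq, hq0⟩ := (L ⊓ H).exists_mem_ne_zero_of_ne_bot fun h ↦ by
    rw [h, finrank_bot] at hdim
    omega
  exact ⟨q, hq0, eq_span_singleton_of_mem_of_finrank_eq_one (by omega) hq hq0⟩

end Submodule

namespace LinearMap.BilinForm

open Submodule

variable {F V : Type*} [Field F] [AddCommGroup V] [Module F V] {ξ : LinearMap.BilinForm F V}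
  {H : Submodule F V} {p q₁ q₂ : V}

theorem mem_orthogonal_span_iff {s : Set V} {m : V} :
    m ∈ ξ.orthogonal (span F s) ↔ ∀ n ∈ s, ξ n m = 0 :=
  ⟨fun h n hn ↦ h n (subset_span hn),
    fun h _ hn ↦ (span_le (p := LinearMap.ker (ξ.flip m)) |>.mpr h) hn⟩

theorem forall_mem_span_singleton_apply_eq_zero_iff :
    (∀ x ∈ span F {q₁}, ∀ y ∈ span F {q₂}, ξ x y = 0) ↔ ξ q₁ q₂ = 0 := by
  refine ⟨fun h ↦ h _ (mem_span_singleton_self q₁) _ (mem_span_singleton_self q₂), ?_⟩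
  rintro h _ hx _ hy
  obtain ⟨a, rfl⟩ := mem_span_singleton.mp hx
  obtain ⟨b, rfl⟩ := mem_span_singleton.mp hy
  simp [h]

theorem span_pair_inf_orthogonal_eq_bot (hrefl : ξ.IsRefl) (h₁ : ξ q₁ q₁ = 0)
    (h₂ : ξ q₂ q₂ = 0) (h₁₂ : ξ q₁ q₂ ≠ 0) :
    span F {q₁, q₂} ⊓ ξ.orthogonal (span F {q₁, q₂}) = ⊥ := by
  refine (Submodule.eq_bot_iff _).2 fun v hv ↦ ?_
  obtain ⟨hv, hvo⟩ := mem_inf.mp hv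
  obtain ⟨a, b, rfl⟩ := mem_span_pair.mp hv
  have h₂₁ : ξ q₂ q₁ ≠ 0 := fun h ↦ h₁₂ (hrefl _ _ h)
  rw [mem_orthogonal_span_iff] at hvo
  have hb := hvo q₁ (by simp)
  have ha := hvo q₂ (by simp)
  simp only [add_right, smul_right, h₁, h₂, mul_zero, zero_add, add_zero, mul_eq_zero, h₁₂, h₂₁,
    or_false] at ha hb
  simp [ha, hb]

theorem span_triple_inf_orthogonal_eq_bot (hrefl : ξ.IsRefl) (hH : ∀ v, ξ v v = 0 ↔ v ∈ H)
    (hp : p ∉ H) (hq₁ : q₁ ∈ H) (hq₂ : q₂ ∈ H) (h₁₂ : ξ q₁ q₂ ≠ 0) :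
    span F {p, q₁, q₂} ⊓ ξ.orthogonal (span F {p, q₁, q₂}) = ⊥ := by
  have hPH : span F {q₁, q₂} ≤ H := span_le.mpr (Set.insert_subset_iff.mpr ⟨hq₁, by simpa⟩)
  rw [eq_bot_iff, ← span_pair_inf_orthogonal_eq_bot hrefl ((hH q₁).2 hq₁) ((hH q₂).2 hq₂) h₁₂]
  rintro v ⟨hvA, hv⟩
  refine ⟨?_, orthogonal_le (span_mono (Set.subset_insert _ _)) hv⟩
  rw [← span_singleton_sup_inf_eq_of_le hp hPH, ← span_insert]
  exact ⟨hvA, (hH v).1 (hv v hvA)⟩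

theorem span_triple_inf_orthogonal_ne_bot (hrefl : ξ.IsRefl)
    (h₁ : ξ q₁ q₁ = 0) (h₂ : ξ q₂ q₂ = 0) (h₁₂ : ξ q₁ q₂ = 0)
    (hq : LinearIndependent F ![q₁, q₂]) :
    span F {p, q₁, q₂} ⊓ ξ.orthogonal (span F {p, q₁, q₂}) ≠ ⊥ := by
  obtain ⟨v, hv, hv0, hpv⟩ := exists_mem_span_pair_ne_zero_apply_eq_zero hq (ξ p)
  refine (Submodule.ne_bot_iff _).2
    ⟨v, mem_inf.mpr ⟨span_mono (Set.subset_insert _ _) hv, ?_⟩, hv0⟩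
  obtain ⟨a, b, rfl⟩ := mem_span_pair.mp hv
  have h₂₁ := hrefl _ _ h₁₂
  simp only [mem_orthogonal_span_iff, Set.mem_insert_iff, Set.mem_singleton_iff,
    forall_eq_or_imp, forall_eq]
  exact ⟨hpv, by simp [h₁, h₁₂], by simp [h₂, h₂₁]⟩

end LinearMap.BilinForm

open Submodule LinearMap.BilinForm in
theorem stmt19_general {F V : Type*} [Field F] [AddCommGroup V] [Module F V]
    [FiniteDimensional F V]
    (ξ : LinearMap.BilinForm F V) (hrefl : ξ.IsRefl)
    (H : Submodule F V) (hH : ∀ v : V, ξ v v = 0 ↔ v ∈ H)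
    (hHhyp : Module.finrank F H + 1 = Module.finrank F V)
    (L₁ L₂ : Submodule F V) (hL₁2 : Module.finrank F L₁ = 2)
    (hL₂2 : Module.finrank F L₂ = 2)
    (p : V) (hpH : p ∉ H)
    (hmeet : L₁ ⊓ L₂ = Submodule.span F {p}) :
    (L₁ ⊔ L₂) ⊓ ξ.orthogonal (L₁ ⊔ L₂) ≠ ⊥ ↔
      ∀ x ∈ L₁ ⊓ H, ∀ y ∈ L₂ ⊓ H, ξ x y = 0 := by
  have hpL : p ∈ L₁ ⊓ L₂ := hmeet ▸ mem_span_singleton_self p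
  obtain ⟨q₁, hq₁, hK₁⟩ := exists_inf_eq_span_singleton hHhyp hpH hpL.1 hL₁2
  obtain ⟨q₂, hq₂, hK₂⟩ := exists_inf_eq_span_singleton hHhyp hpH hpL.2 hL₂2
  have hq₁K : q₁ ∈ L₁ ⊓ H := hK₁ ▸ mem_span_singleton_self q₁
  have hq₂K : q₂ ∈ L₂ ⊓ H := hK₂ ▸ mem_span_singleton_self q₂
  have hA : L₁ ⊔ L₂ = span F {p, q₁, q₂} := by
    rw [← span_singleton_sup_inf_eq hHhyp hpH hpL.1, ← span_singleton_sup_inf_eq hHhyp hpH hpL.2,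
      hK₁, hK₂, span_insert, span_insert, ← sup_sup_distrib_left]
  have hq : LinearIndependent F ![q₁, q₂] := by
    refine (LinearIndependent.pair_iff' hq₁).mpr fun a haq ↦ hq₂ ?_
    have : q₂ ∈ L₁ ⊓ L₂ ⊓ H := ⟨⟨haq ▸ L₁.smul_mem a hq₁K.1, hq₂K.1⟩, hq₂K.2⟩
    rwa [hmeet, (disjoint_span_singleton_of_notMem hpH).symm.eq_bot, mem_bot] at this
  rw [hA, hK₁, hK₂, forall_mem_span_singleton_apply_eq_zero_iff]
  exact ⟨not_imp_comm.mp (span_triple_inf_orthogonal_eq_bot hrefl hH hpH hq₁K.2 hq₂K.2),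
    fun h₁₂ ↦ span_triple_inf_orthogonal_ne_bot hrefl ((hH q₁).2 hq₁K.2) ((hH q₂).2 hq₂K.2) h₁₂ hq⟩

open LinearMap.BilinForm in
/-- For distinct regular lines L₁, L₂ meeting in a regular point p, the plane
A = L₁ + L₂ is nonregular iff (L₁ ∩ H) ⊥ (L₂ ∩ H). -/
theorem stmt19 {F V : Type*} [Field F] [AddCommGroup V] [Module F V]
    [FiniteDimensional F V] [CharP F 2] [PerfectField F]
    (ξ : LinearMap.BilinForm F V) (hnd : ξ.Nondegenerate) (hrefl : ξ.IsRefl)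
    (H : Submodule F V) (hH : ∀ v : V, ξ v v = 0 ↔ v ∈ H)
    (hHhyp : Module.finrank F H + 1 = Module.finrank F V)
    (L₁ L₂ : Submodule F V) (hL₁2 : Module.finrank F L₁ = 2)
    (hL₂2 : Module.finrank F L₂ = 2) (hne : L₁ ≠ L₂)
    (hL₁reg : L₁ ⊓ ξ.orthogonal L₁ = ⊥) (hL₂reg : L₂ ⊓ ξ.orthogonal L₂ = ⊥)
    (p : V) (hp : p ≠ 0) (hpH : p ∉ H)
    (hmeet : L₁ ⊓ L₂ = Submodule.span F {p}) :
    (L₁ ⊔ L₂) ⊓ ξ.orthogonal (L₁ ⊔ L₂) ≠ ⊥ ↔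
      ∀ x ∈ L₁ ⊓ H, ∀ y ∈ L₂ ⊓ H, ξ x y = 0 :=
  stmt19_general ξ hrefl H hH hHhyp L₁ L₂ hL₁2 hL₂2 p hpH hmeet
end
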